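/- Let I = (G, T, R, k, l) be an MMCU instance and let u_1, ..., u_t ∈ T be pairwise distinct, pairwise nonadjacent terminals of the same equivalence class of R with N_G(u_1) = N_G(u_2) = ... = N_G(u_t) ⊆ V(G) \ T and t > l + 2. Let I' be obtained from I by deleting the terminals u_{l+3}, ..., u_t from the graph (and removing them from T and from R). Then the set of minimal solutions of I and the set of minimal solutions of I' are equal. -/

import Mathlib

/-- A multigraph on vertex type `V` with edge type `E`: each edge has an
unordered pair of endpoints. -/
structure Multigraph (V : Type*) (E : Type*) where
  ends : E → Sym2 V

namespace Multigraph

variable {V E : Type*}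

/-- The multigraph has no self-loops. -/
def Loopless (G : Multigraph V E) : Prop := ∀ e : E, ¬ (G.ends e).IsDiag

/-- Two vertices are adjacent if some edge joins them. -/
def Adj (G : Multigraph V E) (a b : V) : Prop := ∃ e : E, G.ends e = s(a, b)

/-- The (open) neighbourhood of a vertex. -/
def nbhd (G : Multigraph V E) (v : V) : Set V := {u | G.Adj v u}

/-- The neighbourhood `N_G(D)` of a set of vertices. -/
def setNbhd (G : Multigraph V E) (D : Set V) : Set V :=
  {u | u ∉ D ∧ ∃ d ∈ D, G.Adj u d}

/-- One step along an edge of `G − (X, F)`. -/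
def Step (G : Multigraph V E) (X : Set V) (F : Set E) (a b : V) : Prop :=
  a ∉ X ∧ b ∉ X ∧ ∃ e : E, e ∉ F ∧ G.ends e = s(a, b)

/-- `u` and `v` lie in the same connected component of `G − (X, F)`. -/
def Conn (G : Multigraph V E) (X : Set V) (F : Set E) (u v : V) : Prop :=
  u ∉ X ∧ v ∉ X ∧ Relation.ReflTransGen (G.Step X F) u v

end Multigraph

/-- `R` is an equivalence relation on the set `T` (and vanishes outside `T`). -/
def IsEquivOn {V : Type*} (T : Set V) (R : V → V → Prop) : Prop :=
  (∀ u v, R u v → u ∈ T ∧ v ∈ T) ∧ (∀ u ∈ T, R u u) ∧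
    (∀ u v, R u v → R v u) ∧ (∀ u v w, R u v → R v w → R u w)

/-- `(X, F)` is a solution to the MMCU instance `(G, T, R, k, l)`. -/
def IsSolution {V E : Type*} (G : Multigraph V E) (T : Set V) (R : V → V → Prop)
    (k l : ℕ) (X : Set V) (F : Set E) : Prop :=
  X ⊆ Tᶜ ∧ X.ncard ≤ k ∧ F.ncard ≤ l ∧
    ∀ u ∈ T, ∀ v ∈ T, (G.Conn X F u v ↔ R u v)

/-- `(X, F)` is a minimal solution to the MMCU instance `(G, T, R, k, l)`. -/
def IsMinSolution {V E : Type*} (G : Multigraph V E) (T : Set V) (R : V → V → Prop)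
    (k l : ℕ) (X : Set V) (F : Set E) : Prop :=
  IsSolution G T R k l X F ∧
    ∀ X' F', IsSolution G T R k l X' F' → X' ⊆ X → F' ⊆ F → X' = X ∧ F' = F

/-- The graph obtained from `G` by deleting the vertices of `U` (together with all
incident edges); the remaining vertices of `U` are isolated and no longer used. -/
def Multigraph.deleteVerts {V E : Type*} (G : Multigraph V E) (U : Set V) :
    Multigraph V {e : E // ∀ x ∈ G.ends e, x ∉ U} where
  ends := fun e => G.ends e.1

/-! If a twin `s` loses an edge `sw` in a minimal solution `(X, F)`, then, since an edge
meets at most one twin and `|F| ≤ l`, some twin `m ≠ s` keeps all its edges, in particular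
`mw`; as `s` and `m` stay connected, putting `sw` back changes no connectivity, contradicting
minimality. With `l + 2` twins left this holds in both instances, and then a removed twin `v`
behaves in `G − (X, F)` exactly like a kept twin `u₀`: collapsing `v` onto `u₀` turns walks of
`G` into walks of the smaller graph, and `v` is joined to `u₀` through a surviving common
neighbour. So solutions that leave the twins' edges alone correspond, and minimality transfers
both ways, a minimal solution of `I'` never deleting the isolated removed vertices. -/

open Relation Set

namespace Multigraph

variable {V E : Type*} {G : Multigraph V E} {X : Set V} {F : Set E}

instance : Std.Symm (G.Step X F) where
  symm _ _ := fun ⟨ha, hb, e, heF, he⟩ => ⟨hb, ha, e, heF, he.trans Sym2.eq_swap⟩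

theorem Conn.symm {a b : V} (h : G.Conn X F a b) : G.Conn X F b a :=
  ⟨h.2.1, h.1, Std.Symm.symm _ _ h.2.2⟩

theorem Conn.trans {a b c : V} (hab : G.Conn X F a b) (hbc : G.Conn X F b c) :
    G.Conn X F a c :=
  ⟨hab.1, hbc.2.1, hab.2.2.trans hbc.2.2⟩

theorem Conn.exists_adj_notMem {a b : V} (h : G.Conn X F a b) (hne : a ≠ b) :
    ∃ w, G.Adj a w ∧ w ∉ X := by
  rcases h.2.2.cases_head with rfl | ⟨c, ⟨-, hcX, e, -, he⟩, -⟩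
  · exact absurd rfl hne
  · exact ⟨c, ⟨e, he⟩, hcX⟩

theorem step_of_mem_nbhd {v w : V} (hw : w ∈ G.nbhd v) (hvX : v ∉ X) (hwX : w ∉ X)
    (hF : ∀ e ∈ F, v ∉ G.ends e) : G.Step X F v w := by
  obtain ⟨e, he⟩ := hw
  exact ⟨hvX, hwX, e, fun heF => hF e heF (he ▸ Sym2.mem_mk_left _ _), he⟩

theorem conn_of_mem_nbhd_of_mem_nbhd {a b w : V} (ha : w ∈ G.nbhd a) (hb : w ∈ G.nbhd b)
    (haX : a ∉ X) (hbX : b ∉ X) (hwX : w ∉ X)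
    (hFa : ∀ e ∈ F, a ∉ G.ends e) (hFb : ∀ e ∈ F, b ∉ G.ends e) : G.Conn X F a b :=
  ⟨haX, hbX, .head (step_of_mem_nbhd ha haX hwX hFa)
    (.single (Std.Symm.symm _ _ (step_of_mem_nbhd hb hbX hwX hFb)))⟩

theorem conn_sdiff_singleton_iff {e : E} {a b : V} (he : G.ends e = s(a, b))
    (hab : a ∉ X → b ∉ X → ReflTransGen (G.Step X F) a b) {p q : V} :
    G.Conn X (F \ {e}) p q ↔ G.Conn X F p q := by
  refine and_congr_right fun _ => and_congr_right fun _ =>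
    ⟨fun h => ?_, fun h => ReflTransGen.mono ?_ _ _ h⟩
  · refine reflTransGen_closed (fun c d ⟨hc, hd, e', he'F, he'⟩ => ?_) _ _ h
    by_cases he'e : e' = e
    · subst he'e
      rcases Sym2.eq_iff.1 (he.symm.trans he') with ⟨rfl, rfl⟩ | ⟨rfl, rfl⟩
      · exact hab hc hd
      · exact Std.Symm.symm _ _ (hab hd hc)
    · exact .single ⟨hc, hd, e', fun h => he'F ⟨h, he'e⟩, he'⟩
  · rintro c d ⟨hc, hd, e', he'F, he'⟩
    exact ⟨hc, hd, e', fun h => he'F h.1, he'⟩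

variable {U : Set V} {F' : Set {e : E // ∀ x ∈ G.ends e, x ∉ U}}

theorem notMem_of_mem_ends {e : E} {a b : V} (he : G.ends e = s(a, b)) (ha : a ∉ U)
    (hb : b ∉ U) : ∀ x ∈ G.ends e, x ∉ U := by
  intro x hx
  rw [he, Sym2.mem_iff] at hx
  rcases hx with rfl | rfl <;> assumption

theorem deleteVerts_step_iff {a b : V} :
    (G.deleteVerts U).Step X F' a b ↔ a ∉ U ∧ b ∉ U ∧ G.Step X (Subtype.val '' F') a b := by
  constructor
  · rintro ⟨haX, hbX, e, heF, he⟩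
    have he : G.ends e.1 = s(a, b) := he
    refine ⟨e.2 a (he ▸ Sym2.mem_mk_left _ _), e.2 b (he ▸ Sym2.mem_mk_right _ _),
      haX, hbX, e.1, ?_, he⟩
    rintro ⟨e', he'F, he'⟩
    exact heF (Subtype.ext he' ▸ he'F)
  · rintro ⟨haU, hbU, haX, hbX, e, heF, he⟩
    exact ⟨haX, hbX, ⟨e, notMem_of_mem_ends he haU hbU⟩, fun h => heF ⟨_, h, rfl⟩, he⟩

theorem Conn.of_deleteVerts {p q : V} (h : (G.deleteVerts U).Conn X F' p q) :
    G.Conn X (Subtype.val '' F') p q :=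
  ⟨h.1, h.2.1, ReflTransGen.mono (fun _ _ hab => (deleteVerts_step_iff.1 hab).2.2) _ _ h.2.2⟩

theorem deleteVerts_nbhd {v : V} (hv : v ∉ U) (hdisj : Disjoint (G.nbhd v) U) :
    (G.deleteVerts U).nbhd v = G.nbhd v := by
  ext w
  refine ⟨fun ⟨e, he⟩ => ⟨e.1, he⟩, fun ⟨e, he⟩ => ⟨⟨e, notMem_of_mem_ends he hv ?_⟩, he⟩⟩
  exact hdisj.notMem_of_mem_left ⟨e, he⟩

theorem conn_deleteVerts_iff {u₀ : V} (hu₀U : u₀ ∉ U) (hu₀X : u₀ ∉ X)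
    (hnbhd : ∀ v ∈ U, G.nbhd v = G.nbhd u₀) (hdisj : Disjoint (G.nbhd u₀) U)
    (hF' : ∀ e ∈ F', u₀ ∉ G.ends e.1) {p q : V} (hp : p ∉ U) (hq : q ∉ U) :
    (G.deleteVerts U).Conn X F' p q ↔ G.Conn X (Subtype.val '' F') p q := by
  classical
  refine ⟨Conn.of_deleteVerts, fun ⟨hpX, hqX, hpq⟩ => ⟨hpX, hqX, ?_⟩⟩
  have hstep_u₀ : ∀ c ∈ G.nbhd u₀, c ∉ X → (G.deleteVerts U).Step X F' u₀ c :=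
    fun c hc hcX => deleteVerts_step_iff.2 ⟨hu₀U, hdisj.notMem_of_mem_left hc,
      step_of_mem_nbhd hc hu₀X hcX (by rintro _ ⟨e, he, rfl⟩; exact hF' e he)⟩
  let σ : V → V := fun v => if v ∈ U then u₀ else v
  have hstep : ∀ a b, G.Step X (Subtype.val '' F') a b →
      (G.deleteVerts U).Step X F' (σ a) (σ b) := by
    intro a b hab
    obtain ⟨haX, hbX, e, -, he⟩ := id hab
    by_cases haU : a ∈ U
    · have hb : b ∈ G.nbhd u₀ := hnbhd a haU ▸ ⟨e, he⟩
      simpa [σ, haU, hdisj.notMem_of_mem_left hb] using hstep_u₀ b hb hbX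
    by_cases hbU : b ∈ U
    · have ha : a ∈ G.nbhd u₀ := hnbhd b hbU ▸ ⟨e, he.trans Sym2.eq_swap⟩
      simpa [σ, haU, hbU] using Std.Symm.symm _ _ (hstep_u₀ a ha haX)
    · simpa [σ, haU, hbU] using deleteVerts_step_iff.2 ⟨haU, hbU, hab⟩
  simpa [Function.onFun, σ, hp, hq] using ReflTransGen.lift σ hstep p q hpq

end Multigraph

theorem IsMinSolution.disjoint_deleteVerts {V E : Type*} {G : Multigraph V E} {U T : Set V}
    {R : V → V → Prop} {k l : ℕ} {X : Set V} {F' : Set {e : E // ∀ x ∈ G.ends e, x ∉ U}}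
    (h : IsMinSolution (G.deleteVerts U) T R k l X F') : Disjoint X U := by
  obtain ⟨⟨hXT, hk, hl, hconn⟩, hmin⟩ := h
  refine Set.disjoint_left.2 fun v hvX hvU => ?_
  have hstep : (G.deleteVerts U).Step (X \ {v}) F' = (G.deleteVerts U).Step X F' := by
    ext a b
    rw [Multigraph.deleteVerts_step_iff, Multigraph.deleteVerts_step_iff]
    simp only [Multigraph.Step, mem_sdiff, mem_singleton_iff]
    constructor
    · rintro ⟨haU, hbU, haX, hbX, h⟩
      exact ⟨haU, hbU, fun h' => haX ⟨h', by rintro rfl; exact haU hvU⟩,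
        fun h' => hbX ⟨h', by rintro rfl; exact hbU hvU⟩, h⟩
    · rintro ⟨haU, hbU, haX, hbX, h⟩
      exact ⟨haU, hbU, fun h' => haX h'.1, fun h' => hbX h'.1, h⟩
  have hsol : IsSolution (G.deleteVerts U) T R k l (X \ {v}) F' := by
    refine ⟨sdiff_subset.trans hXT, (ncard_sdiff_singleton_le X v).trans hk, hl,
      fun p hp q hq => ?_⟩
    have hpX : p ∉ X := fun h => hXT h hp
    have hqX : q ∉ X := fun h => hXT h hq
    simpa [Multigraph.Conn, hstep, hpX, hqX] using hconn p hp q hq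
  exact ((hmin _ _ hsol sdiff_subset subset_rfl).1 ▸ hvX).2 rfl

theorem forall_iff_of_forall_iff_of_reps {α : Type*} {T T' : Set α} {r s : α → α → Prop}
    (hr_symm : ∀ a b, r a b → r b a) (hr_trans : ∀ a b c, r a b → r b c → r a c)
    (hs_symm : ∀ a b, s a b → s b a) (hs_trans : ∀ a b c, s a b → s b c → s a c)
    (hrep : ∀ p ∈ T, ∃ p' ∈ T', r p p' ∧ s p p')
    (h : ∀ p ∈ T', ∀ q ∈ T', r p q ↔ s p q) :
    ∀ p ∈ T, ∀ q ∈ T, r p q ↔ s p q := by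
  have transport : ∀ t : α → α → Prop, (∀ a b, t a b → t b a) →
      (∀ a b c, t a b → t b c → t a c) → ∀ {p p' q q'}, t p p' → t q q' → (t p q ↔ t p' q') :=
    fun t hsymm htrans _ _ _ _ hp hq =>
      ⟨fun hpq => htrans _ _ _ (hsymm _ _ hp) (htrans _ _ _ hpq hq),
        fun hpq => htrans _ _ _ hp (htrans _ _ _ hpq (hsymm _ _ hq))⟩
  intro p hp q hq
  obtain ⟨p', hp', hrp, hsp⟩ := hrep p hp
  obtain ⟨q', hq', hrq, hsq⟩ := hrep q hq
  calc r p q ↔ r p' q' := transport r hr_symm hr_trans hrp hrq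
    _ ↔ s p' q' := h p' hp' q' hq'
    _ ↔ s p q := (transport s hs_symm hs_trans hsp hsq).symm

structure IsTwinTerminals {V E : Type*} (G : Multigraph V E) (T : Set V) (R : V → V → Prop)
    (S : Set V) : Prop where
  subset : S ⊆ T
  rel : ∀ a ∈ S, ∀ b ∈ S, R a b
  nbhd_eq : ∀ a ∈ S, ∀ b ∈ S, G.nbhd a = G.nbhd b
  nbhd_subset : ∀ a ∈ S, G.nbhd a ⊆ Tᶜ

namespace IsTwinTerminals

variable {V E : Type*} {G : Multigraph V E} {T : Set V} {R : V → V → Prop} {S : Set V}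

theorem eq_of_mem_ends (hS : IsTwinTerminals G T R S) {a b : V} (ha : a ∈ S) (hb : b ∈ S)
    {e : E} (hae : a ∈ G.ends e) (hbe : b ∈ G.ends e) : a = b := by
  obtain ⟨w, hw⟩ := Sym2.mem_iff_exists.1 hae
  rw [hw, Sym2.mem_iff] at hbe
  rcases hbe with rfl | rfl
  · rfl
  · exact absurd (hS.subset hb) (hS.nbhd_subset a ha ⟨e, hw⟩)

theorem encard_incident_le (hS : IsTwinTerminals G T R S) (F : Set E) :
    {s ∈ S | ∃ e ∈ F, s ∈ G.ends e}.encard ≤ F.encard := by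
  have hchoice : ∀ s : {s ∈ S | ∃ e ∈ F, s ∈ G.ends e}, ∃ e : F, s.1 ∈ G.ends e :=
    fun ⟨_, _, e, he, hs⟩ => ⟨⟨e, he⟩, hs⟩
  choose f hf using hchoice
  refine Function.Embedding.encard_le ⟨f, fun s s' hss' => Subtype.ext ?_⟩
  exact hS.eq_of_mem_ends s.2.1 s'.2.1 (hf s) (hss' ▸ hf s')

theorem notMem_ends_of_isMinSolution [Finite E] (hS : IsTwinTerminals G T R S) {k l : ℕ}
    (hcard : (l + 1 : ℕ∞) < S.encard) {X : Set V} {F : Set E}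
    (h : IsMinSolution G T R k l X F) : ∀ e ∈ F, ∀ s ∈ S, s ∉ G.ends e := by
  intro e he s hs hse
  obtain ⟨⟨hXT, hk, hl, hconn⟩, hmin⟩ := h
  obtain ⟨w, hw⟩ := Sym2.mem_iff_exists.1 hse
  have hsmall : ({x ∈ S | ∃ e ∈ F, x ∈ G.ends e} ∪ {s}).encard < S.encard := calc
    _ ≤ F.encard + 1 := by
      grw [encard_union_le, encard_singleton, hS.encard_incident_le F]
    _ ≤ l + 1 := by
      rw [← F.toFinite.cast_ncard_eq]
      exact_mod_cast Nat.add_le_add_right hl 1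
    _ < S.encard := hcard
  obtain ⟨m, hm, hm'⟩ := not_subset.1 fun hsub => (encard_le_encard hsub).not_gt hsmall
  have hmF : ∀ e ∈ F, m ∉ G.ends e := fun e he hme => hm' (.inl ⟨hm, e, he, hme⟩)
  have hmX : m ∉ X := fun h => hXT h (hS.subset hm)
  have hsw : s ∉ X → w ∉ X → ReflTransGen (G.Step X F) s w := fun _ hwX =>
    ((hconn s (hS.subset hs) m (hS.subset hm)).2 (hS.rel s hs m hm)).2.2.tail
      (Multigraph.step_of_mem_nbhd (hS.nbhd_eq s hs m hm ▸ ⟨e, hw⟩) hmX hwX hmF)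
  have hsol : IsSolution G T R k l X (F \ {e}) :=
    ⟨hXT, hk, (ncard_sdiff_singleton_le F e).trans hl, fun p hp q hq =>
      (Multigraph.conn_sdiff_singleton_iff hw hsw).trans (hconn p hp q hq)⟩
  exact ((hmin _ _ hsol subset_rfl sdiff_subset).2 ▸ he).2 rfl

variable {U X : Set V} {F' : Set {e : E // ∀ x ∈ G.ends e, x ∉ U}} {k l : ℕ}

theorem deleteVerts (hS : IsTwinTerminals G T R S) (hU : U ⊆ T) :
    IsTwinTerminals (G.deleteVerts U) (T \ U) (fun a b => a ∉ U ∧ b ∉ U ∧ R a b) (S \ U) := by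
  have hnbhd : ∀ a ∈ S \ U, (G.deleteVerts U).nbhd a = G.nbhd a := fun a ha =>
    Multigraph.deleteVerts_nbhd ha.2 (disjoint_compl_left.mono (hS.nbhd_subset a ha.1) hU)
  refine ⟨sdiff_subset_sdiff_left hS.subset, fun a ha b hb => ⟨ha.2, hb.2, hS.rel a ha.1 b hb.1⟩,
    fun a ha b hb => ?_, fun a ha => ?_⟩
  · rw [hnbhd a ha, hnbhd b hb]
    exact hS.nbhd_eq a ha.1 b hb.1
  · rw [hnbhd a ha]
    exact (hS.nbhd_subset a ha.1).trans (compl_subset_compl.2 sdiff_subset)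

theorem forall_conn_deleteVerts_iff (hS : IsTwinTerminals G T R S) (hR : IsEquivOn T R) (hU : U ⊆ S)
    {u₀ w : V} (hu₀ : u₀ ∈ S \ U) (hw : w ∈ G.nbhd u₀) (hwX : w ∉ X) (hXT : X ⊆ Tᶜ)
    (hF' : ∀ e ∈ F', ∀ s ∈ S, s ∉ G.ends e.1) :
    (∀ p ∈ T \ U, ∀ q ∈ T \ U, ((G.deleteVerts U).Conn X F' p q ↔ p ∉ U ∧ q ∉ U ∧ R p q)) ↔
      ∀ p ∈ T, ∀ q ∈ T, (G.Conn X (Subtype.val '' F') p q ↔ R p q) := by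
  obtain ⟨-, hrefl, hsymm, htrans⟩ := hR
  have hnotX : ∀ v ∈ T, v ∉ X := fun v hv hvX => hXT hvX hv
  have hF : ∀ s ∈ S, ∀ e ∈ Subtype.val '' F', s ∉ G.ends e := by
    rintro s hs _ ⟨e, he, rfl⟩
    exact hF' e he s hs
  have htransfer : ∀ p ∉ U, ∀ q ∉ U,
      ((G.deleteVerts U).Conn X F' p q ↔ G.Conn X (Subtype.val '' F') p q) :=
    fun p hp q hq => Multigraph.conn_deleteVerts_iff hu₀.2 (hnotX _ (hS.subset hu₀.1))
      (fun v hv => hS.nbhd_eq v (hU hv) u₀ hu₀.1)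
      (disjoint_compl_left.mono (hS.nbhd_subset u₀ hu₀.1) (hU.trans hS.subset))
      (fun e he => hF' e he u₀ hu₀.1) hp hq
  constructor
  · intro h'
    refine forall_iff_of_forall_iff_of_reps (T' := T \ U) (fun _ _ => Multigraph.Conn.symm)
      (fun _ _ _ => Multigraph.Conn.trans) hsymm htrans (fun p hp => ?_) fun p hp q hq => ?_
    · by_cases hpU : p ∈ U
      · have hpS := hU hpU
        exact ⟨u₀, ⟨hS.subset hu₀.1, hu₀.2⟩, Multigraph.conn_of_mem_nbhd_of_mem_nbhd
          (hS.nbhd_eq p hpS u₀ hu₀.1 ▸ hw) hw (hnotX p hp) (hnotX _ (hS.subset hu₀.1)) hwX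
          (hF p hpS) (hF u₀ hu₀.1), hS.rel p hpS u₀ hu₀.1⟩
      · exact ⟨p, ⟨hp, hpU⟩, ⟨hnotX p hp, hnotX p hp, .refl⟩, hrefl p hp⟩
    · rw [← htransfer p hp.2 q hq.2, h' p hp q hq]
      exact ⟨fun h => h.2.2, fun h => ⟨hp.2, hq.2, h⟩⟩
  · intro h p hp q hq
    rw [htransfer p hp.2 q hq.2, h p hp.1 q hq.1]
    exact ⟨fun h => ⟨hp.2, hq.2, h⟩, fun h => h.2.2⟩

theorem isSolution_deleteVerts_iff (hS : IsTwinTerminals G T R S) (hR : IsEquivOn T R)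
    (hU : U ⊆ S) (htwo : 1 < (S \ U).encard) (hXU : Disjoint X U)
    (hF' : ∀ e ∈ F', ∀ s ∈ S, s ∉ G.ends e.1) :
    IsSolution (G.deleteVerts U) (T \ U) (fun a b => a ∉ U ∧ b ∉ U ∧ R a b) k l X F' ↔
      IsSolution G T R k l X (Subtype.val '' F') := by
  obtain ⟨u₀, u₁, hu₀, hu₁, hne⟩ := one_lt_encard_iff.1 htwo
  have hu₀T : u₀ ∈ T \ U := ⟨hS.subset hu₀.1, hu₀.2⟩
  have hu₁T : u₁ ∈ T \ U := ⟨hS.subset hu₁.1, hu₁.2⟩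
  have hXT : X ⊆ (T \ U)ᶜ ↔ X ⊆ Tᶜ :=
    ⟨fun h x hx hxT => h hx ⟨hxT, hXU.notMem_of_mem_left hx⟩,
      fun h => h.trans (compl_subset_compl.2 sdiff_subset)⟩
  unfold IsSolution
  rw [hXT, ncard_image_of_injective _ Subtype.val_injective]
  constructor
  · rintro ⟨hXT, hk, hl, hconn⟩
    obtain ⟨w, hw, hwX⟩ := ((hconn u₀ hu₀T u₁ hu₁T).2
      ⟨hu₀.2, hu₁.2, hS.rel u₀ hu₀.1 u₁ hu₁.1⟩).of_deleteVerts.exists_adj_notMem hne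
    exact ⟨hXT, hk, hl, (hS.forall_conn_deleteVerts_iff hR hU hu₀ hw hwX hXT hF').1 hconn⟩
  · rintro ⟨hXT, hk, hl, hconn⟩
    obtain ⟨w, hw, hwX⟩ := ((hconn u₀ hu₀T.1 u₁ hu₁T.1).2
      (hS.rel u₀ hu₀.1 u₁ hu₁.1)).exists_adj_notMem hne
    exact ⟨hXT, hk, hl, (hS.forall_conn_deleteVerts_iff hR hU hu₀ hw hwX hXT hF').2 hconn⟩

theorem isMinSolution_deleteVerts_iff [Finite E] (hS : IsTwinTerminals G T R S)
    (hR : IsEquivOn T R) (hU : U ⊆ S) (hcard : (l + 1 : ℕ∞) < (S \ U).encard) :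
    IsMinSolution (G.deleteVerts U) (T \ U) (fun a b => a ∉ U ∧ b ∉ U ∧ R a b) k l X F' ↔
      IsMinSolution G T R k l X (Subtype.val '' F') := by
  have htwo : 1 < (S \ U).encard := lt_of_le_of_lt le_add_self hcard
  have hsol := fun (Y : Set V) (F'' : Set {e : E // ∀ x ∈ G.ends e, x ∉ U}) =>
    hS.isSolution_deleteVerts_iff (k := k) (l := l) (X := Y) (F' := F'') hR hU htwo
  constructor
  · intro h
    have hXU := h.disjoint_deleteVerts
    have hF' : ∀ e ∈ F', ∀ s ∈ S, s ∉ G.ends e.1 := fun e he s hs hse => by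
      by_cases hsU : s ∈ U
      · exact e.2 s hse hsU
      · exact (hS.deleteVerts (hU.trans hS.subset)).notMem_ends_of_isMinSolution hcard h e he
          s ⟨hs, hsU⟩ hse
    refine ⟨(hsol X F' hXU hF').1 h.1, fun X₂ F₂ h₂ hX₂ hF₂ => ?_⟩
    obtain ⟨F₂', rfl⟩ : ∃ F₂', F₂ = Subtype.val '' F₂' :=
      ⟨Subtype.val ⁻¹' F₂, (image_preimage_eq_of_subset (hF₂.trans (image_subset_range _ _))).symm⟩
    have hF₂' : F₂' ⊆ F' := (image_subset_image_iff Subtype.val_injective).1 hF₂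
    obtain ⟨hX, hF⟩ := h.2 X₂ F₂'
      ((hsol X₂ F₂' (hXU.mono_left hX₂) fun e he => hF' e (hF₂' he)).2 h₂) hX₂ hF₂'
    exact ⟨hX, congrArg _ hF⟩
  · intro h
    have hF' : ∀ e ∈ F', ∀ s ∈ S, s ∉ G.ends e.1 := fun e he =>
      hS.notMem_ends_of_isMinSolution (hcard.trans_le (encard_le_encard sdiff_subset)) h e.1
        ⟨e, he, rfl⟩
    have hXU : Disjoint X U := disjoint_compl_left.mono h.1.1 (hU.trans hS.subset)
    refine ⟨(hsol X F' hXU hF').2 h.1, fun X₂ F₂' h₂ hX₂ hF₂' => ?_⟩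
    obtain ⟨hX, hF⟩ := h.2 X₂ _
      ((hsol X₂ F₂' (hXU.mono_left hX₂) fun e he => hF' e (hF₂' he)).1 h₂) hX₂ (image_mono hF₂')
    exact ⟨hX, Subtype.val_injective.image_injective hF⟩

end IsTwinTerminals

theorem stmt8_general {V E : Type*} [Fintype E]
    (G : Multigraph V E)
    (T : Set V) (R : V → V → Prop) (hR : IsEquivOn T R) (k l t : ℕ)
    (u : Fin t → V) (hinj : Function.Injective u) (hT : ∀ i, u i ∈ T)
    (hclass : ∀ i j, R (u i) (u j))
    (hN : ∀ i j, G.nbhd (u i) = G.nbhd (u j))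
    (hNT : ∀ i, G.nbhd (u i) ⊆ Tᶜ)
    (ht : l + 2 < t)
    (U' : Set V) (hU' : U' = {x | ∃ i : Fin t, l + 2 ≤ (i : ℕ) ∧ x = u i}) :
    (∀ X F, IsMinSolution G T R k l X F → ∀ e ∈ F, ∀ x ∈ G.ends e, x ∉ U') ∧
    (∀ (X : Set V) (F' : Set {e : E // ∀ x ∈ G.ends e, x ∉ U'}),
      IsMinSolution (G.deleteVerts U') (T \ U')
          (fun a b => a ∉ U' ∧ b ∉ U' ∧ R a b) k l X F' ↔
        IsMinSolution G T R k l X (Subtype.val '' F')) := by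
  have hS : IsTwinTerminals G T R (range u) :=
    ⟨range_subset_iff.2 hT, forall_mem_range.2 fun i => forall_mem_range.2 (hclass i),
      forall_mem_range.2 fun i => forall_mem_range.2 (hN i), forall_mem_range.2 hNT⟩
  have hU : U' ⊆ range u := by
    rw [hU']
    rintro _ ⟨i, -, rfl⟩
    exact mem_range_self i
  have hkept : range (u ∘ Fin.castLE ht.le) ⊆ range u \ U' := by
    rintro _ ⟨i, rfl⟩
    refine ⟨mem_range_self _, ?_⟩
    rw [hU']
    rintro ⟨j, hj, hij⟩
    have := congrArg Fin.val (hinj hij)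
    simp only [Fin.val_castLE] at this
    omega
  have hcard : (l + 1 : ℕ∞) < (range u \ U').encard := calc
    (l + 1 : ℕ∞) < ENat.card (Fin (l + 2)) := by simp
    _ ≤ (range (u ∘ Fin.castLE ht.le)).encard :=
      (hinj.comp (Fin.castLE_injective _)).encard_range
    _ ≤ _ := encard_le_encard hkept
  refine ⟨fun X F h e he x hx hxU => ?_, fun X F' => hS.isMinSolution_deleteVerts_iff hR hU hcard⟩
  exact hS.notMem_ends_of_isMinSolution (hcard.trans_le (encard_le_encard sdiff_subset)) h e he x
    (hU hxU) hx

/-- Let `u₁, …, u_t` be pairwise distinct, pairwise nonadjacent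
terminals of the same equivalence class of `R` with identical neighbourhoods contained
in `V(G) \ T`, and `t > l + 2`. Let `I'` be obtained from `I` by deleting the terminals
`u_{l+3}, …, u_t`. Then no minimal solution of `I` deletes an edge incident to a deleted
terminal, and (under the natural correspondence of the remaining edges) the minimal
solutions of `I` and of `I'` coincide. -/
theorem stmt8 {V E : Type*} [Fintype V] [Fintype E]
    (G : Multigraph V E) (hG : G.Loopless)
    (T : Set V) (R : V → V → Prop) (hR : IsEquivOn T R) (k l t : ℕ)
    (u : Fin t → V) (hinj : Function.Injective u) (hT : ∀ i, u i ∈ T)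
    (hclass : ∀ i j, R (u i) (u j))
    (hnonadj : ∀ i j, i ≠ j → ¬ G.Adj (u i) (u j))
    (hN : ∀ i j, G.nbhd (u i) = G.nbhd (u j))
    (hNT : ∀ i, G.nbhd (u i) ⊆ Tᶜ)
    (ht : l + 2 < t)
    (U' : Set V) (hU' : U' = {x | ∃ i : Fin t, l + 2 ≤ (i : ℕ) ∧ x = u i}) :
    (∀ X F, IsMinSolution G T R k l X F → ∀ e ∈ F, ∀ x ∈ G.ends e, x ∉ U') ∧
    (∀ (X : Set V) (F' : Set {e : E // ∀ x ∈ G.ends e, x ∉ U'}),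
      IsMinSolution (G.deleteVerts U') (T \ U')
          (fun a b => a ∉ U' ∧ b ∉ U' ∧ R a b) k l X F' ↔
        IsMinSolution G T R k l X (Subtype.val '' F')) :=
  stmt8_general G T R hR k l t u hinj hT hclass hN hNT ht U' hU'
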